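/- arXiv:2203.07566 — 2 statements merged into one kernel-verified Lean document; each statement's English description precedes it below -/
import Mathlib

section
/- Let (T, X) be a closed tree decomposition of the Hasse diagram of a 2-dimensional simplicial complex K (each bag X_t is a simplicial complex), and for a node t define K_t = (⋃_{d ∈ D(t)} X_d) \ (X_t)_2 where D(t) is the set of descendants of t (including t) and (X_t)_2 is the set of triangles of X_t. Then K_t is a simplicial complex. -/
/-- Let `(T, X)` be a *closed* tree decomposition of the Hasse diagram of a
2-dimensional simplicial complex `K` (each bag `X_t` is itself a simplicial complex, i.e.
downward closed for nonempty faces, and all simplices have at most 3 vertices).  For a node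
`t`, with `D t` the set of descendants of `t` (including `t` itself), the set
`K_t = (⋃_{d ∈ D(t)} X_d) \ (X_t)₂` (removing the triangles of the bag `X_t`) is a
simplicial complex. -/
theorem subcomplex_rooted_isComplex {α ι : Type*}
    (X : ι → Set (Finset α)) (D : ι → Set ι) (t : ι) (ht : t ∈ D t)
    (hclosed : ∀ s, ∀ σ ∈ X s, ∀ τ ⊆ σ, τ.Nonempty → τ ∈ X s)
    (hdim : ∀ s, ∀ σ ∈ X s, σ.card ≤ 3) :
    ∀ σ ∈ (⋃ d ∈ D t, X d) \ {ρ | ρ ∈ X t ∧ ρ.card = 3},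
      ∀ τ ⊆ σ, τ.Nonempty →
        τ ∈ (⋃ d ∈ D t, X d) \ {ρ | ρ ∈ X t ∧ ρ.card = 3} := by
  rintro σ ⟨hσU, hσT⟩ τ hτσ hτne
  simp only [Set.mem_iUnion] at hσU
  obtain ⟨d, hd, hσd⟩ := hσU
  refine ⟨Set.mem_iUnion.2 ⟨d, Set.mem_iUnion.2 ⟨hd, hclosed d σ hσd τ hτσ hτne⟩⟩, ?_⟩
  rintro ⟨hτt, hτ3⟩
  have hcard := hdim d σ hσd
  have hστ : τ = σ := Finset.eq_of_subset_of_card_le hτσ (by omega)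
  exact hσT ⟨hστ ▸ hτt, hστ ▸ hτ3⟩
end

section
/- In a cell complex, if a face A has boundary word B(A) = (X a a^{-1}) (cyclically), then the cell complex is equivalent (under the least equivalence relation generated by elementary subdivisions) to the cell complex obtained by deleting a and replacing A with a face A' whose boundary is (X). -/
/-!
Cut the face `(X a a⁻¹)` between `a` and `a⁻¹` along a fresh edge `c`, giving the faces
`(X a c)` and `(c⁻¹ a⁻¹)`. The path `a c` is the subdivision of a single fresh edge `d`, so
undoing it gives the faces `(X d)` and `(d⁻¹)`, and these merge along `d` into `(X)`.
-/

/-- An oriented edge: an edge name together with an orientation. -/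
abbrev OEdge := ℕ × Bool

/-- A boundary word of a face (read cyclically). -/
abbrev CWord := List OEdge

/-- A cell complex, presented by a choice of boundary word for each face. -/
abbrev PreCell := Multiset CWord

/-- The inverse of an oriented edge. -/
def oinv (x : OEdge) : OEdge := (x.1, !x.2)

/-- The inverse of a boundary word. -/
def winv (w : CWord) : CWord := (w.map oinv).reverse

/-- The edge `e` occurs (in some orientation) in the word `w`. -/
def occursW (e : ℕ) (w : CWord) : Prop := ∃ b, (e, b) ∈ w

/-- The edge `e` occurs in the complex `C`. -/
def occursC (e : ℕ) (C : PreCell) : Prop := ∃ w ∈ C, occursW e w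

/-- The total number of occurrences of the edge `e` (in either orientation) among the
boundary words of `C`. -/
def occCount (e : ℕ) (C : PreCell) : ℕ :=
  (C.map fun w => w.countP fun p => p.1 == e).sum

/-- `(F, E, B)` is a cell complex: every (oriented) edge appears at most twice in total
among the chosen boundary words. -/
def IsCellComplex (C : PreCell) : Prop := ∀ e : ℕ, occCount e C ≤ 2

/-- Substitution used in an elementary subdivision: replace the edge `a` by the two-letter
word `bc` (and `a⁻¹` by `c⁻¹b⁻¹`). -/
def substEdge (a b c : ℕ) (p : OEdge) : CWord :=
  if p.1 = a then (if p.2 then [(b, true), (c, true)] else [(c, false), (b, false)])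
  else [p]

/-- The elementary moves on cell complexes: cyclic rotation of a boundary word, replacing a
face by its inverse, splitting a face `(XY)` into `(Xa) + (a⁻¹Y)` along a fresh edge `a`,
and subdividing an edge `a` into a word `bc` of fresh edges. -/
inductive ElemMove : PreCell → PreCell → Prop
  | rot (w₁ w₂ : CWord) (C : PreCell) :
      ElemMove ((w₁ ++ w₂) ::ₘ C) ((w₂ ++ w₁) ::ₘ C)
  | invert (w : CWord) (C : PreCell) :
      ElemMove (w ::ₘ C) (winv w ::ₘ C)
  | split (Xw Yw : CWord) (a : ℕ) (C : PreCell)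
      (haX : ¬ occursW a Xw) (haY : ¬ occursW a Yw) (haC : ¬ occursC a C) :
      ElemMove ((Xw ++ Yw) ::ₘ C)
        ((Xw ++ [(a, true)]) ::ₘ ((a, false) :: Yw) ::ₘ C)
  | subdivide (a b c : ℕ) (C : PreCell)
      (hb : ¬ occursC b C) (hc : ¬ occursC c C) (hbc : b ≠ c) :
      ElemMove C (C.map fun w => w.flatMap (substEdge a b c))

/-- Equivalence of cell complexes: the least equivalence relation generated by the
elementary moves (elementary subdivisions and their inverses). -/
def CellEquiv : PreCell → PreCell → Prop := Relation.EqvGen ElemMove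

@[simp]
lemma not_occursW_nil {e : ℕ} : ¬ occursW e [] := fun ⟨_, h⟩ => List.not_mem_nil h

@[simp]
lemma occursW_cons {e : ℕ} {p : OEdge} {w : CWord} :
    occursW e (p :: w) ↔ p.1 = e ∨ occursW e w := by
  simp [occursW, exists_or, Prod.ext_iff, eq_comm]

@[simp]
lemma occursW_append {e : ℕ} {X Y : CWord} :
    occursW e (X ++ Y) ↔ occursW e X ∨ occursW e Y := by
  simp only [occursW, List.mem_append, exists_or]

@[simp]
lemma occursC_cons {e : ℕ} {w : CWord} {C : PreCell} :
    occursC e (w ::ₘ C) ↔ occursW e w ∨ occursC e C := by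
  simp only [occursC, Multiset.mem_cons, exists_eq_or_imp]

lemma exists_forall_le_not_occursC (C : PreCell) : ∃ N, ∀ e, N ≤ e → ¬ occursC e C := by
  obtain ⟨N, hN⟩ := (C.bind fun w => (w.map Prod.fst : Multiset ℕ)).toFinset.bddAbove
  refine ⟨N + 1, fun e he ⟨w, hw, b, hb⟩ => ?_⟩
  have : e ≤ N := hN <| Multiset.mem_toFinset.2 <| Multiset.mem_bind.2
    ⟨w, hw, Multiset.mem_coe.2 (List.mem_map.2 ⟨_, hb, rfl⟩)⟩
  omega

lemma flatMap_substEdge_of_not_occursW {a b c : ℕ} {w : CWord} (h : ¬ occursW a w) :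
    w.flatMap (substEdge a b c) = w := by
  induction w with
  | nil => rfl
  | cons p w ih =>
    simp only [occursW_cons, not_or] at h
    simp [substEdge, h.1, ih h.2]

lemma map_flatMap_substEdge_of_not_occursC {a b c : ℕ} {C : PreCell} (h : ¬ occursC a C) :
    C.map (fun w => w.flatMap (substEdge a b c)) = C := by
  conv_rhs => rw [← Multiset.map_id C]
  exact Multiset.map_congr rfl fun w hw =>
    flatMap_substEdge_of_not_occursW fun hw' => h ⟨w, hw, hw'⟩

lemma cellEquiv_split {X Y : CWord} {e : ℕ} {C : PreCell} (h : ¬ occursC e ((X ++ Y) ::ₘ C)) :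
    CellEquiv ((X ++ Y) ::ₘ C) ((X ++ [(e, true)]) ::ₘ ((e, false) :: Y) ::ₘ C) := by
  simp only [occursC_cons, occursW_append, not_or] at h
  exact .rel _ _ (.split X Y e C h.1.1 h.1.2 h.2)

lemma cellEquiv_subdivide {e b c : ℕ} {C : PreCell} (hb : ¬ occursC b C) (hc : ¬ occursC c C)
    (hbc : b ≠ c) : CellEquiv C (C.map fun w => w.flatMap (substEdge e b c)) :=
  .rel _ _ (.subdivide e b c C hb hc hbc)

theorem remove_consecutive_inverse_general (Xw : CWord) (a : ℕ) (C : PreCell)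
    (haX : ¬ occursW a Xw) (haC : ¬ occursC a C) :
    CellEquiv ((Xw ++ [(a, true), (a, false)]) ::ₘ C) (Xw ::ₘ C) := by
  obtain ⟨N, hN⟩ := exists_forall_le_not_occursC ((Xw ++ [(a, true), (a, false)]) ::ₘ C)
  have hfresh : ∀ e, N ≤ e → ¬ occursW e Xw ∧ e ≠ a ∧ ¬ occursC e C := fun e he => by
    simpa [not_or, and_assoc, eq_comm] using hN e he
  obtain ⟨hNX, hNa, hNC⟩ := hfresh N le_rfl
  obtain ⟨hMX, hMa, hMC⟩ := hfresh (N + 1) (Nat.le_succ N)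
  have split_inner : CellEquiv ((Xw ++ [(a, true), (a, false)]) ::ₘ C)
      ((Xw ++ [(a, true), (N + 1, true)]) ::ₘ [(N + 1, false), (a, false)] ::ₘ C) := by
    simpa using cellEquiv_split (X := Xw ++ [(a, true)]) (Y := [(a, false)]) (e := N + 1)
      (by simp [hMX, hMa.symm, hMC])
  have split_outer : CellEquiv (Xw ::ₘ C) ((Xw ++ [(N, true)]) ::ₘ [(N, false)] ::ₘ C) := by
    simpa using cellEquiv_split (X := Xw) (Y := []) (e := N) (by simp [hNX, hNC])
  have subdivide : CellEquiv ((Xw ++ [(N, true)]) ::ₘ [(N, false)] ::ₘ C)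
      ((Xw ++ [(a, true), (N + 1, true)]) ::ₘ [(N + 1, false), (a, false)] ::ₘ C) := by
    have := cellEquiv_subdivide (e := N) (b := a) (c := N + 1)
      (C := (Xw ++ [(N, true)]) ::ₘ [(N, false)] ::ₘ C)
      (by simp [haX, haC, hNa]) (by simp [hMX, hMC]) (by omega)
    simpa [flatMap_substEdge_of_not_occursW hNX, map_flatMap_substEdge_of_not_occursC hNC,
      substEdge] using this
  exact .trans _ _ _ split_inner (.symm _ _ (.trans _ _ _ split_outer subdivide))

/-- In a cell complex, if a face `A` has boundary word
`B(A) = (X a a⁻¹)` (cyclically), then the complex is equivalent to the one obtained by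
deleting the edge `a` and replacing `A` by a face `A'` with boundary `(X)`. -/
theorem remove_consecutive_inverse (Xw : CWord) (a : ℕ) (C : PreCell)
    (hval : IsCellComplex ((Xw ++ [(a, true), (a, false)]) ::ₘ C))
    (haX : ¬ occursW a Xw) (haC : ¬ occursC a C) :
    CellEquiv ((Xw ++ [(a, true), (a, false)]) ::ₘ C) (Xw ::ₘ C) :=
  remove_consecutive_inverse_general Xw a C haX haC
end
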